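/- Let 𝓜 = {A₁, …, A_m} ⊂ ℝ^{n×n} consist of nonsingular matrices. Then the stabilizability radius satisfies ρ̃(𝓜) ≥ ( Σ_{h=1}^m |det A_h|^{-1} )^{-1/n}. -/
import Mathlib


open Real MeasureTheory

noncomputable def appE {n : ℕ} (A : Matrix (Fin n) (Fin n) ℝ) (x : EuclideanSpace ℝ (Fin n)) :
    EuclideanSpace ℝ (Fin n) :=
  Matrix.toEuclideanLin A x

def IsTraj {n : ℕ} (M : Set (Matrix (Fin n) (Fin n) ℝ)) (x : ℕ → EuclideanSpace ℝ (Fin n)) : Prop :=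
  ∀ k : ℕ, ∃ A ∈ M, x (k + 1) = appE A (x k)

noncomputable def stabRadius {n : ℕ} (M : Set (Matrix (Fin n) (Fin n) ℝ)) : ℝ :=
  sInf {l : ℝ | 0 ≤ l ∧ ∃ C > (0:ℝ), ∀ x0 : EuclideanSpace ℝ (Fin n),
    ∃ x : ℕ → EuclideanSpace ℝ (Fin n), x 0 = x0 ∧ IsTraj M x ∧
      ∀ k : ℕ, ‖x k‖ ≤ C * l ^ k * ‖x0‖}

noncomputable def stabRadiusAt {n : ℕ} (M : Set (Matrix (Fin n) (Fin n) ℝ))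
    (x0 : EuclideanSpace ℝ (Fin n)) : ℝ :=
  sInf {l : ℝ | 0 ≤ l ∧ ∃ x : ℕ → EuclideanSpace ℝ (Fin n), x 0 = x0 ∧ IsTraj M x ∧
    ∃ C > (0:ℝ), ∀ k : ℕ, ‖x k‖ ≤ C * l ^ k * ‖x0‖}

lemma appE_one {n : ℕ} (x : EuclideanSpace ℝ (Fin n)) : appE 1 x = x := by
  simp [appE, Matrix.toEuclideanLin_apply]

lemma appE_mul {n : ℕ} (M N : Matrix (Fin n) (Fin n) ℝ) (x : EuclideanSpace ℝ (Fin n)) :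
    appE (M * N) x = appE M (appE N x) := by
  simp [appE, Matrix.toEuclideanLin_apply, Matrix.mulVec_mulVec]

lemma det_toEuclideanLin {n : ℕ} (M : Matrix (Fin n) (Fin n) ℝ) :
    LinearMap.det (Matrix.toEuclideanLin M : EuclideanSpace ℝ (Fin n) →ₗ[ℝ] _) = M.det := by
  rw [Matrix.toEuclideanLin_eq_toLin, LinearMap.det_toLin]

noncomputable def Wprod {n m : ℕ} (A : Fin m → Matrix (Fin n) (Fin n) ℝ) (s : ℕ → Fin m) :
    ℕ → Matrix (Fin n) (Fin n) ℝ
  | 0 => 1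
  | (k+1) => A (s k) * Wprod A s k

lemma Wprod_congr {n m : ℕ} (A : Fin m → Matrix (Fin n) (Fin n) ℝ) (s s' : ℕ → Fin m) (T : ℕ)
    (h : ∀ k < T, s k = s' k) : Wprod A s T = Wprod A s' T := by
  induction T with
  | zero => rfl
  | succ k ih =>
    simp only [Wprod, h k (Nat.lt_succ_self k), ih (fun j hj => h j (hj.trans (Nat.lt_succ_self k)))]

lemma det_Wprod {n m : ℕ} (A : Fin m → Matrix (Fin n) (Fin n) ℝ) (s : ℕ → Fin m) (T : ℕ) :
    (Wprod A s T).det = ∏ j ∈ Finset.range T, (A (s j)).det := by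
  induction T with
  | zero => simp [Wprod]
  | succ k ih => rw [Wprod, Matrix.det_mul, ih, Finset.prod_range_succ]; ring

lemma traj_Wprod {n m : ℕ} (A : Fin m → Matrix (Fin n) (Fin n) ℝ) (s : ℕ → Fin m)
    (x : ℕ → EuclideanSpace ℝ (Fin n)) (hx : ∀ k, x (k+1) = appE (A (s k)) (x k)) (T : ℕ) :
    x T = appE (Wprod A s T) (x 0) := by
  induction T with
  | zero => simp [Wprod, appE_one]
  | succ k ih => rw [hx k, ih, Wprod, appE_mul]

lemma key_ineq {n m : ℕ} (hn : 0 < n) (hm : 0 < m) (A : Fin m → Matrix (Fin n) (Fin n) ℝ)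
    (hA : ∀ h, (A h).det ≠ 0) {l C : ℝ} (hl : 0 ≤ l) (hC : 0 < C)
    (hst : ∀ x0 : EuclideanSpace ℝ (Fin n),
      ∃ x : ℕ → EuclideanSpace ℝ (Fin n), x 0 = x0 ∧ IsTraj (Set.range A) x ∧
        ∀ k : ℕ, ‖x k‖ ≤ C * l ^ k * ‖x0‖) (T : ℕ) :
    (1:ℝ) ≤ C ^ n * ((∑ h, |(A h).det|⁻¹) * l ^ n) ^ T := by
  classical
  set S : ℝ := ∑ h, |(A h).det|⁻¹ with hS
  set r : ℝ := C * l ^ T with hr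
  have hr0 : 0 ≤ r := mul_nonneg hC.le (pow_nonneg hl T)
  set ext : (Fin T → Fin m) → ℕ → Fin m :=
    fun w k => if h : k < T then w ⟨k, h⟩ else ⟨0, hm⟩ with hext
  -- covering of the unit ball
  have hcov : Metric.closedBall (0 : EuclideanSpace ℝ (Fin n)) 1 ⊆
      ⋃ w : Fin T → Fin m, (fun x => appE (Wprod A (ext w) T) x) ⁻¹' Metric.closedBall 0 r := by
    intro x0 hx0
    obtain ⟨x, hx00, htraj, hbnd⟩ := hst x0
    choose B hB hstep using htraj
    choose s hs using hB
    have hstep' : ∀ k, x (k+1) = appE (A (s k)) (x k) := by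
      intro k; rw [hstep k, hs k]
    set w : Fin T → Fin m := fun i => s i with hw
    refine Set.mem_iUnion.2 ⟨w, ?_⟩
    have hWeq : Wprod A (ext w) T = Wprod A s T := by
      apply Wprod_congr
      intro k hk
      simp [hext, hw, hk]
    simp only [Set.mem_preimage, Metric.mem_closedBall, dist_zero_right]
    rw [hWeq, ← hx00, ← traj_Wprod A s x hstep' T]
    calc ‖x T‖ ≤ C * l ^ T * ‖x 0‖ := by rw [hx00]; exact hbnd T
      _ ≤ C * l ^ T * 1 := by
          apply mul_le_mul_of_nonneg_left _ (mul_nonneg hC.le (pow_nonneg hl T))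
          rw [hx00]
          simpa [dist_zero_right] using hx0
      _ = r := by rw [mul_one]
  -- measure computation
  set μ : Measure (EuclideanSpace ℝ (Fin n)) := volume with hμ
  have hdetW : ∀ w : Fin T → Fin m, (Wprod A (ext w) T).det ≠ 0 := by
    intro w; rw [det_Wprod]; exact Finset.prod_ne_zero_iff.2 fun j _ => hA _
  have hpre : ∀ w : Fin T → Fin m,
      μ ((fun x => appE (Wprod A (ext w) T) x) ⁻¹' Metric.closedBall 0 r) =
        ENNReal.ofReal |(Wprod A (ext w) T).det|⁻¹ * μ (Metric.closedBall 0 r) := by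
    intro w
    have := MeasureTheory.Measure.addHaar_preimage_linearMap μ
      (f := (Matrix.toEuclideanLin (Wprod A (ext w) T) : EuclideanSpace ℝ (Fin n) →ₗ[ℝ] _))
      (by rw [det_toEuclideanLin]; exact hdetW w) (Metric.closedBall 0 r)
    rw [det_toEuclideanLin, abs_inv] at this
    exact this
  have hball : μ (Metric.closedBall 0 r) = ENNReal.ofReal (r ^ n) * μ (Metric.closedBall 0 1) := by
    have := Measure.addHaar_closedBall' μ (0 : EuclideanSpace ℝ (Fin n)) hr0
    rwa [finrank_euclideanSpace_fin] at this
  have hμB0 : μ (Metric.closedBall (0 : EuclideanSpace ℝ (Fin n)) 1) ≠ 0 :=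
    (Metric.measure_closedBall_pos μ 0 one_pos).ne'
  have hμBt : μ (Metric.closedBall (0 : EuclideanSpace ℝ (Fin n)) 1) ≠ ⊤ :=
    measure_closedBall_lt_top.ne
  have hmono := measure_mono (μ := μ) hcov
  have hsum := (measure_iUnion_fintype_le μ
    (fun w : Fin T → Fin m => (fun x => appE (Wprod A (ext w) T) x) ⁻¹' Metric.closedBall 0 r))
  have key : μ (Metric.closedBall (0:EuclideanSpace ℝ (Fin n)) 1) ≤
      ENNReal.ofReal (S ^ T * r ^ n) * μ (Metric.closedBall 0 1) := by
    refine hmono.trans (hsum.trans ?_)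
    have heach : ∀ w : Fin T → Fin m,
        μ ((fun x => appE (Wprod A (ext w) T) x) ⁻¹' Metric.closedBall 0 r) =
        ENNReal.ofReal (|(Wprod A (ext w) T).det|⁻¹ * r ^ n) * μ (Metric.closedBall 0 1) := by
      intro w
      rw [hpre w, hball, ← mul_assoc, ← ENNReal.ofReal_mul (by positivity)]
    rw [Finset.sum_congr rfl (fun w _ => heach w), ← Finset.sum_mul, ← ENNReal.ofReal_sum_of_nonneg
      (fun w _ => by positivity)]
    have hsum_eq : ∑ w : Fin T → Fin m, |(Wprod A (ext w) T).det|⁻¹ * r ^ n = S ^ T * r ^ n := by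
      rw [← Finset.sum_mul]
      congr 1
      have hdets : ∀ w : Fin T → Fin m,
          |(Wprod A (ext w) T).det|⁻¹ = ∏ i : Fin T, |(A (w i)).det|⁻¹ := by
        intro w
        rw [det_Wprod, Finset.abs_prod, ← Finset.prod_inv_distrib]
        rw [← Fin.prod_univ_eq_prod_range (fun j => |(A (ext w j)).det|⁻¹) T]
        exact Finset.prod_congr rfl fun i _ => by simp [hext, i.isLt]
      rw [Finset.sum_congr rfl (fun w _ => hdets w), hS]
      have := (Finset.prod_univ_sum (fun _ : Fin T => (Finset.univ : Finset (Fin m)))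
        (fun _ h => |(A h).det|⁻¹)).symm
      simp only [Fintype.piFinset_univ] at this
      rw [this]
      simp [Finset.prod_const]
    rw [hsum_eq]
  have h1 : (1:ENNReal) ≤ ENNReal.ofReal (S ^ T * r ^ n) := by
    exact (ENNReal.mul_le_mul_iff_left hμB0 hμBt).1 (by rw [one_mul]; exact key)
  have h2 : (1:ℝ) ≤ S ^ T * r ^ n := ENNReal.one_le_ofReal.1 h1
  have h3 : S ^ T * r ^ n = C ^ n * (S * l ^ n) ^ T := by
    rw [hr, mul_pow, mul_pow, ← pow_mul, ← pow_mul, Nat.mul_comm T n]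
    ring
  linarith [h2, h3.symm.le]

set_option maxHeartbeats 1000000 in
set_option synthInstance.maxHeartbeats 400000 in
theorem stmt5 {n m : ℕ} (hn : 0 < n) (hm : 0 < m) (A : Fin m → Matrix (Fin n) (Fin n) ℝ)
    (hA : ∀ h, (A h).det ≠ 0) :
    stabRadius (Set.range A) ≥ (∑ h, |(A h).det|⁻¹) ^ (-(1 : ℝ) / n) := by
  classical
  set S : ℝ := ∑ h, |(A h).det|⁻¹ with hSdef
  have hSpos : 0 < S := by
    apply Finset.sum_pos
    · intro h _
      exact inv_pos.2 (abs_pos.2 (hA h))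
    · exact Finset.univ_nonempty_iff.2 ⟨⟨0, hm⟩⟩
  set c : ℝ := S ^ (-(1:ℝ)/n) with hc
  -- the defining set is nonempty
  have hne : Set.Nonempty {l : ℝ | 0 ≤ l ∧ ∃ C > (0:ℝ), ∀ x0 : EuclideanSpace ℝ (Fin n),
      ∃ x : ℕ → EuclideanSpace ℝ (Fin n), x 0 = x0 ∧ IsTraj (Set.range A) x ∧
        ∀ k : ℕ, ‖x k‖ ≤ C * l ^ k * ‖x0‖} := by
    set L : EuclideanSpace ℝ (Fin n) →L[ℝ] EuclideanSpace ℝ (Fin n) :=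
      LinearMap.toContinuousLinearMap (Matrix.toEuclideanLin (A ⟨0, hm⟩)) with hL
    refine ⟨max 1 ‖L‖, le_trans zero_le_one (le_max_left _ _), 1, one_pos, fun x0 => ?_⟩
    refine ⟨fun k => (fun y => appE (A ⟨0, hm⟩) y)^[k] x0, rfl, ?_, ?_⟩
    · intro k
      exact ⟨A ⟨0, hm⟩, Set.mem_range_self _, Function.iterate_succ_apply' _ k x0⟩
    · intro k
      induction k with
      | zero => simp
      | succ k ih =>
        show ‖(fun y => appE (A ⟨0, hm⟩) y)^[k+1] x0‖ ≤ 1 * max 1 ‖L‖ ^ (k+1) * ‖x0‖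
        rw [Function.iterate_succ_apply']
        have h1 : appE (A ⟨0,hm⟩) ((fun y => appE (A ⟨0,hm⟩) y)^[k] x0) =
            L ((fun y => appE (A ⟨0,hm⟩) y)^[k] x0) := rfl
        rw [h1]
        calc ‖L ((fun y => appE (A ⟨0,hm⟩) y)^[k] x0)‖
            ≤ ‖L‖ * ‖(fun y => appE (A ⟨0,hm⟩) y)^[k] x0‖ := L.le_opNorm _
          _ ≤ (max 1 ‖L‖) * (1 * max 1 ‖L‖ ^ k * ‖x0‖) := by
              apply mul_le_mul (le_max_right _ _) ih (norm_nonneg _)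
              exact le_trans zero_le_one (le_max_left _ _)
          _ = 1 * max 1 ‖L‖ ^ (k+1) * ‖x0‖ := by ring
  refine le_csInf hne ?_
  rintro l ⟨hl0, C, hC, hst⟩
  -- 1 ≤ S * l^n
  have hstep : (1:ℝ) ≤ S * l ^ n := by
    by_contra hlt
    push_neg at hlt
    have hSl0 : 0 ≤ S * l ^ n := mul_nonneg hSpos.le (pow_nonneg hl0 n)
    have hCn : (0:ℝ) < C ^ n := pow_pos hC n
    obtain ⟨T, hT⟩ := exists_pow_lt_of_lt_one (inv_pos.2 hCn) hlt
    have := key_ineq hn hm A hA hl0 hC hst T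
    rw [← hSdef] at this
    have : (1:ℝ) < 1 := by
      calc (1:ℝ) ≤ C ^ n * (S * l ^ n) ^ T := this
        _ < C ^ n * (C ^ n)⁻¹ := by
            exact mul_lt_mul_of_pos_left hT hCn
        _ = 1 := mul_inv_cancel₀ hCn.ne'
    exact absurd this (lt_irrefl 1)
  -- conclude c ≤ l
  have hnR : (n:ℝ) ≠ 0 := Nat.cast_ne_zero.2 hn.ne'
  have hcn : c ^ n = S⁻¹ := by
    rw [hc, ← Real.rpow_natCast (S ^ (-(1:ℝ)/n)) n, ← Real.rpow_mul hSpos.le]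
    rw [div_mul_cancel₀ _ hnR]
    exact Real.rpow_neg_one S
  have hln : S⁻¹ ≤ l ^ n := by
    have h := mul_le_mul_of_nonneg_left hstep (inv_nonneg.2 hSpos.le)
    rwa [mul_one, ← mul_assoc, inv_mul_cancel₀ hSpos.ne', one_mul] at h
  have hc0 : 0 ≤ c := Real.rpow_nonneg hSpos.le _
  have : c ^ n ≤ l ^ n := by rw [hcn]; exact hln
  exact (pow_le_pow_iff_left₀ hc0 hl0 hn.ne').1 this
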